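/- For quantum channels E, E', F, F' with appropriate input/output spaces, the diamond norm of the difference of tensor products satisfies ‖E ⊗ F − E' ⊗ F'‖_⋄ ≤ ‖E − E'‖_⋄ + ‖F − F'‖_⋄. -/

import Mathlib

open scoped Matrix Kronecker ComplexOrder
open Matrix

noncomputable section

namespace QIT

variable {A B A' B' O : Type*}

/-- A density operator: positive semidefinite with unit trace. -/
def IsDensity [Fintype A] (ρ : Matrix A A ℂ) : Prop :=
  ρ.PosSemidef ∧ ρ.trace = 1

open Classical in
/-- Square root of a positive semidefinite matrix (junk value otherwise). -/
def msqrt [Fintype A] [DecidableEq A] (M : Matrix A A ℂ) : Matrix A A ℂ :=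
  if h : M.PosSemidef then h.1.eigenvectorUnitary.1 *
    diagonal ((↑) ∘ Real.sqrt ∘ h.1.eigenvalues) * (star h.1.eigenvectorUnitary : Matrix A A ℂ)
  else 0

/-- Trace norm ‖M‖₁ = tr √(MᴴM). -/
def traceNorm [Fintype A] [DecidableEq A] (M : Matrix A A ℂ) : ℝ :=
  (msqrt (Mᴴ * M)).trace.re

/-- Fidelity F(ρ,σ) = tr √(√ρ σ √ρ). -/
def fidelity [Fintype A] [DecidableEq A] (ρ σ : Matrix A A ℂ) : ℝ :=
  (msqrt (msqrt ρ * σ * msqrt ρ)).trace.re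

/-- Von Neumann entropy in bits, via eigenvalues. -/
def entropy [Fintype A] [DecidableEq A] (ρ : Matrix A A ℂ) : ℝ :=
  if h : ρ.IsHermitian then -∑ i, (h.eigenvalues i) * Real.logb 2 (h.eigenvalues i) else 0

/-- Partial trace over the second tensor factor. -/
def ptraceB [Fintype B] (M : Matrix (A × B) (A × B) ℂ) : Matrix A A ℂ :=
  of fun i j => ∑ b, M (i, b) (j, b)

/-- Partial trace over the first tensor factor. -/
def ptraceA [Fintype A] (M : Matrix (A × B) (A × B) ℂ) : Matrix B B ℂ :=
  of fun i j => ∑ a, M (a, i) (a, j)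

/-- Quantum mutual information I(A:B) = H(A) + H(B) - H(AB). -/
def mutualInfo [Fintype A] [DecidableEq A] [Fintype B] [DecidableEq B]
    (ρ : Matrix (A × B) (A × B) ℂ) : ℝ :=
  entropy (ptraceB ρ) + entropy (ptraceA ρ) - entropy ρ

/-- Binary entropy function (base 2). -/
def binEntropy (x : ℝ) : ℝ := -(x * Real.logb 2 x) - (1 - x) * Real.logb 2 (1 - x)

/-- Extension Φ ⊗ id_B of a linear map on matrices. -/
def lext [Fintype A] [Fintype A'] [Fintype B]
    (Φ : Matrix A A ℂ →ₗ[ℂ] Matrix A' A' ℂ) :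
    Matrix (A × B) (A × B) ℂ →ₗ[ℂ] Matrix (A' × B) (A' × B) ℂ where
  toFun M := of fun p q => Φ (of fun i j => M (i, p.2) (j, q.2)) p.1 q.1
  map_add' M N := by
    ext p q
    have h : (of fun i j => (M + N) (i, p.2) (j, q.2)) =
        (of fun i j => M (i, p.2) (j, q.2)) + (of fun i j => N (i, p.2) (j, q.2)) := rfl
    simp only [of_apply, Matrix.add_apply]
    rw [show (of fun i j => M (i, p.2) (j, q.2) + N (i, p.2) (j, q.2)) =
        (of fun i j => M (i, p.2) (j, q.2)) + (of fun i j => N (i, p.2) (j, q.2)) from rfl,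
      map_add]
    simp [Matrix.add_apply]
  map_smul' c M := by
    ext p q
    simp only [of_apply, Matrix.smul_apply, RingHom.id_apply]
    rw [show (of fun i j => c • M (i, p.2) (j, q.2)) =
        c • (of fun i j => M (i, p.2) (j, q.2)) from rfl, LinearMap.map_smul]
    simp [Matrix.smul_apply]

/-- Extension id_A ⊗ Ψ of a linear map on matrices. -/
def rext [Fintype B] [Fintype B'] [Fintype A]
    (Ψ : Matrix B B ℂ →ₗ[ℂ] Matrix B' B' ℂ) :
    Matrix (A × B) (A × B) ℂ →ₗ[ℂ] Matrix (A × B') (A × B') ℂ where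
  toFun M := of fun p q => Ψ (of fun i j => M (p.1, i) (q.1, j)) p.2 q.2
  map_add' M N := by
    ext p q
    simp only [of_apply, Matrix.add_apply]
    rw [show (of fun i j => M (p.1, i) (q.1, j) + N (p.1, i) (q.1, j)) =
        (of fun i j => M (p.1, i) (q.1, j)) + (of fun i j => N (p.1, i) (q.1, j)) from rfl,
      map_add]
    simp [Matrix.add_apply]
  map_smul' c M := by
    ext p q
    simp only [of_apply, Matrix.smul_apply, RingHom.id_apply]
    rw [show (of fun i j => c • M (p.1, i) (q.1, j)) =
        c • (of fun i j => M (p.1, i) (q.1, j)) from rfl, LinearMap.map_smul]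
    simp [Matrix.smul_apply]

/-- Tensor product E ⊗ F of two maps on matrices. -/
def tensorMap [Fintype A] [Fintype A'] [Fintype B] [Fintype B']
    (E : Matrix A A ℂ →ₗ[ℂ] Matrix A' A' ℂ) (F : Matrix B B ℂ →ₗ[ℂ] Matrix B' B' ℂ) :
    Matrix (A × B) (A × B) ℂ →ₗ[ℂ] Matrix (A' × B') (A' × B') ℂ :=
  (rext F).comp (lext E)

/-- Completely positive trace preserving map. -/
def IsCPTP [Fintype A] [Fintype A'] (Φ : Matrix A A ℂ →ₗ[ℂ] Matrix A' A' ℂ) : Prop :=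
  (∀ (k : ℕ) (M : Matrix (A × Fin k) (A × Fin k) ℂ), M.PosSemidef →
      (lext (B := Fin k) Φ M).PosSemidef) ∧
  ∀ M : Matrix A A ℂ, (Φ M).trace = M.trace

/-- Diamond norm via finite-dimensional ancillas. -/
def diamondNorm [Fintype A] [DecidableEq A] [Fintype A'] [DecidableEq A']
    (Φ : Matrix A A ℂ →ₗ[ℂ] Matrix A' A' ℂ) : ℝ :=
  sSup {r | ∃ (k : ℕ) (X : Matrix (A × Fin k) (A × Fin k) ℂ),
    traceNorm X = 1 ∧ r = traceNorm (lext (B := Fin k) Φ X)}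

/-- Choi–Jamiołkowski matrix of a map. -/
def choi [Fintype A] [DecidableEq A] (Φ : Matrix A A ℂ →ₗ[ℂ] Matrix O O ℂ) :
    Matrix (A × O) (A × O) ℂ :=
  of fun p q => Φ (single p.1 q.1 1) p.2 q.2

/-- The map associated to a Choi matrix. -/
def choiAction [Fintype A] (J : Matrix (A × O) (A × O) ℂ) :
    Matrix A A ℂ →ₗ[ℂ] Matrix O O ℂ where
  toFun ρ := of fun o o' => ∑ i, ∑ j, ρ i j * J (i, o) (j, o')
  map_add' M N := by
    ext o o'
    simp [Matrix.add_apply, add_mul, Finset.sum_add_distrib]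
  map_smul' c M := by
    ext o o'
    simp [Matrix.smul_apply, Finset.mul_sum, mul_assoc]

/-- Permutation unitary W_π on n tensor copies: W_π|f⟩ = |f ∘ π⁻¹⟩. -/
def permMat (n : ℕ) (A : Type*) [DecidableEq A] (π : Equiv.Perm (Fin n)) :
    Matrix (Fin n → A) (Fin n → A) ℂ :=
  of fun g f => if g = f ∘ π.symm then 1 else 0

/-- Partial trace keeping only the j-th copy and the system B. -/
def reduceJ [Fintype A] [DecidableEq A] [Fintype B] {n : ℕ} (j : Fin n)
    (M : Matrix ((Fin n → A) × B) ((Fin n → A) × B) ℂ) : Matrix (A × B) (A × B) ℂ :=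
  of fun p q => ∑ f : Fin n → A,
    if f j = p.1 then M (f, p.2) (Function.update f j q.1, q.2) else 0

/-- Partial trace keeping only the j-th copy (no side system). -/
def reduceJ0 [Fintype A] [DecidableEq A] {n : ℕ} (j : Fin n)
    (M : Matrix (Fin n → A) (Fin n → A) ℂ) : Matrix A A ℂ :=
  of fun a a' => ∑ f : Fin n → A,
    if f j = a then M f (Function.update f j a') else 0

/-- Partial trace keeping the j-th copy on each side. -/
def reduceJJ [Fintype A] [DecidableEq A] [Fintype B] [DecidableEq B] {n : ℕ} (j : Fin n)
    (M : Matrix ((Fin n → A) × (Fin n → B)) ((Fin n → A) × (Fin n → B)) ℂ) :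
    Matrix (A × B) (A × B) ℂ :=
  of fun p q => ∑ f : Fin n → A, ∑ g : Fin n → B,
    if f j = p.1 ∧ g j = p.2 then
      M (f, g) (Function.update f j q.1, Function.update g j q.2) else 0

/-- A symmetric broadcasting channel: covariant under all permutations of outputs. -/
def IsSymmetricBC [Fintype A] [DecidableEq A] {n : ℕ}
    (Λ : Matrix A A ℂ →ₗ[ℂ] Matrix (Fin n → A) (Fin n → A) ℂ) : Prop :=
  ∀ (ρ : Matrix A A ℂ), IsDensity ρ → ∀ π : Equiv.Perm (Fin n),
    Λ ρ = permMat n A π * Λ ρ * (permMat n A π)ᴴ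

/-- The optimal unilocal n-broadcasting fidelity of a bipartite state. -/
def fBroadcast [Fintype A] [DecidableEq A] [Fintype B] [DecidableEq B] (n : ℕ)
    (ρ : Matrix (A × B) (A × B) ℂ) : ℝ :=
  sSup {r | ∃ Λ : Matrix A A ℂ →ₗ[ℂ] Matrix (Fin n → A) (Fin n → A) ℂ, IsCPTP Λ ∧
    r = (n : ℝ)⁻¹ * ∑ j : Fin n, fidelity ρ (reduceJ j (lext (B := B) Λ ρ))}

/-- Channel conjugated by the permutation unitary W_π. -/
def conjPerm [Fintype A] [DecidableEq A] {n : ℕ} (π : Equiv.Perm (Fin n))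
    (Λ : Matrix A A ℂ →ₗ[ℂ] Matrix (Fin n → A) (Fin n → A) ℂ) :
    Matrix A A ℂ →ₗ[ℂ] Matrix (Fin n → A) (Fin n → A) ℂ where
  toFun ρ := permMat n A π * Λ ρ * (permMat n A π)ᴴ
  map_add' M N := by simp [map_add, Matrix.mul_add, Matrix.add_mul]
  map_smul' c M := by simp [Matrix.mul_smul, Matrix.smul_mul]

/-- Symmetrization (1/n!) Σ_π W_π Λ(·) W_π†. -/
def symmetrize [Fintype A] [DecidableEq A] {n : ℕ}
    (Λ : Matrix A A ℂ →ₗ[ℂ] Matrix (Fin n → A) (Fin n → A) ℂ) :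
    Matrix A A ℂ →ₗ[ℂ] Matrix (Fin n → A) (Fin n → A) ℂ :=
  ((n.factorial : ℂ))⁻¹ • ∑ π : Equiv.Perm (Fin n), conjPerm π Λ

/-- Partial transpose on the first (input) factor. -/
def ptransA (J : Matrix (A × O) (A × O) ℂ) : Matrix (A × O) (A × O) ℂ :=
  of fun p q => J (q.1, p.2) (p.1, q.2)

/-- tr_A (X ρ_AB), contracting the A index: entry ((o,b),(o',b')) = Σ_{i,k} X(i,o)(k,o') ρ(k,b)(i,b'). -/
def traceContractA [Fintype A] (X : Matrix (A × O) (A × O) ℂ)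
    (ρ : Matrix (A × B) (A × B) ℂ) : Matrix (O × B) (O × B) ℂ :=
  of fun p q => ∑ i, ∑ k, X (i, p.1) (k, q.1) * ρ (k, p.2) (i, q.2)

/-- A POVM. -/
def IsPOVM {I : Type*} [Fintype I] [Fintype A] [DecidableEq A]
    (M : I → Matrix A A ℂ) : Prop :=
  (∀ i, (M i).PosSemidef) ∧ ∑ i, M i = 1

/-- Quantum-to-classical channel of a POVM: ρ ↦ Σᵢ tr(Mᵢρ)|i⟩⟨i|. -/
def qcChan {I : Type*} [Fintype I] [DecidableEq I] [Fintype A]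
    (M : I → Matrix A A ℂ) : Matrix A A ℂ →ₗ[ℂ] Matrix I I ℂ where
  toFun ρ := of fun i j => if i = j then (M i * ρ).trace else 0
  map_add' X Y := by
    ext i j
    simp only [of_apply, Matrix.add_apply]
    split_ifs <;> simp [Matrix.mul_add]
  map_smul' c X := by
    ext i j
    simp only [of_apply, Matrix.smul_apply, RingHom.id_apply]
    split_ifs <;> simp [Matrix.mul_smul]

/-- Classical broadcast of a POVM outcome into n copies: ρ ↦ Σᵢ tr(Mᵢρ)(|i⟩⟨i|)^{⊗n}. -/
def bcChan {I : Type*} [Fintype I] [DecidableEq I] [Fintype A] {n : ℕ} (hn : 0 < n)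
    (M : I → Matrix A A ℂ) : Matrix A A ℂ →ₗ[ℂ] Matrix (Fin n → I) (Fin n → I) ℂ where
  toFun ρ := of fun f g =>
    if f = g ∧ (∀ k, f k = f ⟨0, hn⟩) then (M (f ⟨0, hn⟩) * ρ).trace else 0
  map_add' X Y := by
    ext f g
    simp only [of_apply, Matrix.add_apply]
    split_ifs <;> simp [Matrix.mul_add]
  map_smul' c X := by
    ext f g
    simp only [of_apply, Matrix.smul_apply, RingHom.id_apply]
    split_ifs <;> simp [Matrix.mul_smul]

/-!
Write `E ⊗ F - E' ⊗ F' = (id ⊗ F) ∘ ((E - E') ⊗ id) + (E' ⊗ id) ∘ (id ⊗ (F - F'))`. On an input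
of trace norm one, each summand first applies a difference of channels, which after regrouping the
untouched tensor factor into the ancilla is bounded by its diamond norm, and then a channel, which
does not increase the trace norm.

Contractivity of channels comes from trace-norm duality `‖M‖₁ = max_{‖C‖ ≤ 1} Re tr (Cᴴ M)` and a
Kraus decomposition `Φ X = ∑ Kᵣ X Kᵣᴴ` read off from a factorisation of the Choi matrix: the dual
map `C ↦ ∑ Kᵣᴴ C Kᵣ` of a trace-preserving Kraus map is an operator-norm contraction, by
Cauchy–Schwarz.
-/

open scoped Matrix.Norms.L2Operator InnerProductSpace

section EuclideanMatrix

variable {m n : Type*} [Fintype m] [Fintype n] [DecidableEq m] [DecidableEq n]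

lemma inner_toEuclideanLin_conjTranspose (A : Matrix m n ℂ) (x : EuclideanSpace ℂ m)
    (y : EuclideanSpace ℂ n) : ⟪y, toEuclideanLin Aᴴ x⟫_ℂ = ⟪toEuclideanLin A y, x⟫_ℂ := by
  rw [Matrix.toEuclideanLin_conjTranspose_eq_adjoint, LinearMap.adjoint_inner_right]

lemma norm_toEuclideanLin_sq (A : Matrix m n ℂ) (x : EuclideanSpace ℂ n) :
    ‖toEuclideanLin A x‖ ^ 2 = RCLike.re ⟪x, toEuclideanLin (Aᴴ * A) x⟫_ℂ := by
  rw [toLpLin_mul_same, LinearMap.comp_apply, inner_toEuclideanLin_conjTranspose,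
    ← inner_self_eq_norm_sq (𝕜 := ℂ)]

lemma trace_eq_sum_inner_toEuclideanLin (X : Matrix n n ℂ)
    (b : OrthonormalBasis n ℂ (EuclideanSpace ℂ n)) :
    X.trace = ∑ i, ⟪b i, toEuclideanLin X (b i)⟫_ℂ := by
  rw [← LinearMap.trace_eq_sum_inner]
  simp [Matrix.toLpLin_eq_toLin]

lemma sum_norm_sq_toEuclideanLin {ι : Type*} [Fintype ι] (K : ι → Matrix m n ℂ)
    (hK : ∑ r, (K r)ᴴ * K r = 1) (x : EuclideanSpace ℂ n) :
    ∑ r, ‖toEuclideanLin (K r) x‖ ^ 2 = ‖x‖ ^ 2 := by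
  simp only [norm_toEuclideanLin_sq]
  rw [← map_sum, ← inner_sum, ← LinearMap.sum_apply, ← map_sum, hK, toLpLin_one,
    LinearMap.id_apply, inner_self_eq_norm_sq]

lemma norm_sum_conjTranspose_mul_mul_le_one {ι : Type*} [Fintype ι] (K : ι → Matrix m n ℂ)
    (hK : ∑ r, (K r)ᴴ * K r = 1) {C : Matrix m m ℂ} (hC : ‖C‖ ≤ 1) :
    ‖∑ r, (K r)ᴴ * C * K r‖ ≤ 1 := by
  refine ContinuousLinearMap.opNorm_le_bound _ zero_le_one fun x => ?_
  change ‖toEuclideanLin (∑ r, (K r)ᴴ * C * K r) x‖ ≤ 1 * ‖x‖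
  set y := toEuclideanLin (∑ r, (K r)ᴴ * C * K r) x with hy
  have hCz : ∀ z, ‖toEuclideanLin C z‖ ≤ ‖z‖ := fun z =>
    (C.l2_opNorm_mulVec z).trans (mul_le_of_le_one_left (norm_nonneg z) hC)
  have key : ‖y‖ ^ 2 ≤ ‖y‖ * ‖x‖ := calc
    ‖y‖ ^ 2 = ∑ r, RCLike.re ⟪toEuclideanLin (K r) y,
        toEuclideanLin C (toEuclideanLin (K r) x)⟫_ℂ := by
      rw [← inner_self_eq_norm_sq (𝕜 := ℂ)]
      nth_rw 2 [hy]
      simp only [map_sum, LinearMap.sum_apply, inner_sum, toLpLin_mul_same, LinearMap.comp_apply,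
        inner_toEuclideanLin_conjTranspose]
    _ ≤ ∑ r, ‖toEuclideanLin (K r) y‖ * ‖toEuclideanLin (K r) x‖ :=
      Finset.sum_le_sum fun r _ => (RCLike.re_le_norm _).trans <|
        (norm_inner_le_norm _ _).trans (mul_le_mul_of_nonneg_left (hCz _) (norm_nonneg _))
    _ ≤ √(∑ r, ‖toEuclideanLin (K r) y‖ ^ 2) * √(∑ r, ‖toEuclideanLin (K r) x‖ ^ 2) :=
      Real.sum_mul_le_sqrt_mul_sqrt _ _ _
    _ = ‖y‖ * ‖x‖ := by
      rw [sum_norm_sq_toEuclideanLin K hK, sum_norm_sq_toEuclideanLin K hK,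
        Real.sqrt_sq (norm_nonneg _), Real.sqrt_sq (norm_nonneg _)]
  nlinarith [norm_nonneg y, norm_nonneg x]

end EuclideanMatrix

lemma trace_conjStarAlgAut {n : Type*} [Fintype n] [DecidableEq n]
    (U : unitary (Matrix n n ℂ)) (X : Matrix n n ℂ) :
    (Unitary.conjStarAlgAut ℂ _ U X).trace = X.trace := by
  rw [Unitary.conjStarAlgAut_apply, trace_mul_cycle, Unitary.coe_star_mul_self, one_mul]

section TraceNorm

variable {m n : Type*} [Fintype m] [Fintype n] [DecidableEq m] [DecidableEq n]

lemma traceNorm_eq_sum_sqrt_eigenvalues (M : Matrix n n ℂ) :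
    traceNorm M = ∑ i, √((isHermitian_conjTranspose_mul_self M).eigenvalues i) := by
  rw [traceNorm, msqrt, dif_pos (posSemidef_conjTranspose_mul_self M), trace_mul_cycle,
    Unitary.coe_star_mul_self, one_mul, trace_diagonal, Complex.re_sum]
  rfl

lemma norm_toEuclideanLin_eigenvectorBasis (M : Matrix n n ℂ) (i : n) :
    ‖toEuclideanLin M ((isHermitian_conjTranspose_mul_self M).eigenvectorBasis i)‖ =
      √((isHermitian_conjTranspose_mul_self M).eigenvalues i) := by
  rw [← Real.sqrt_sq (norm_nonneg _), norm_toEuclideanLin_sq,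
    (isHermitian_conjTranspose_mul_self M).eigenvalues_eq, EuclideanSpace.inner_eq_star_dotProduct,
    dotProduct_comm]
  rfl

lemma re_trace_conjTranspose_mul_le_traceNorm {C : Matrix n n ℂ} (hC : ‖C‖ ≤ 1)
    (M : Matrix n n ℂ) : (Cᴴ * M).trace.re ≤ traceNorm M := by
  set b := (isHermitian_conjTranspose_mul_self M).eigenvectorBasis
  rw [trace_eq_sum_inner_toEuclideanLin _ b, traceNorm_eq_sum_sqrt_eigenvalues, Complex.re_sum]
  refine Finset.sum_le_sum fun i _ => ?_
  rw [toLpLin_mul_same, LinearMap.comp_apply, inner_toEuclideanLin_conjTranspose,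
    ← norm_toEuclideanLin_eigenvectorBasis]
  have hCb : ‖toEuclideanLin C (b i)‖ ≤ 1 := calc
    _ ≤ ‖C‖ * ‖b i‖ := C.l2_opNorm_mulVec (b i)
    _ ≤ 1 := by rw [b.orthonormal.1 i, mul_one]; exact hC
  exact (Complex.re_le_norm _).trans <| (norm_inner_le_norm (𝕜 := ℂ) _ _).trans <|
    mul_le_of_le_one_left (norm_nonneg _) hCb

lemma exists_re_trace_conjTranspose_mul_eq_traceNorm (M : Matrix n n ℂ) :
    ∃ C : Matrix n n ℂ, ‖C‖ ≤ 1 ∧ (Cᴴ * M).trace.re = traceNorm M := by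
  have hH := isHermitian_conjTranspose_mul_self M
  set φ := Unitary.conjStarAlgAut ℂ _ hH.eigenvectorUnitary
  set s : n → ℝ := fun i => √(hH.eigenvalues i)
  -- `N` is the pseudo-inverse of `√(Mᴴ M)` (with `0⁻¹ = 0`): `N Mᴴ M = √(Mᴴ M)`, and
  -- `(M N)ᴴ (M N)` is a projection.
  set N := φ (diagonal fun i => ((s i)⁻¹ : ℂ))
  have hs : ∀ i, (s i)⁻¹ * hH.eigenvalues i = s i := fun i => by
    rw [inv_mul_eq_div, Real.div_sqrt]
  have hNH : Nᴴ = N := by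
    rw [← star_eq_conjTranspose, ← map_star, star_eq_conjTranspose, diagonal_conjTranspose]
    congr 2
    ext i
    simp
  have hNMM : N * (Mᴴ * M) = φ (diagonal fun i => (s i : ℂ)) := by
    have hspec : Mᴴ * M = φ (diagonal (RCLike.ofReal ∘ hH.eigenvalues)) := hH.spectral_theorem
    rw [hspec, ← map_mul, diagonal_mul_diagonal]
    congr 2
    ext i
    simpa using congrArg ((↑) : ℝ → ℂ) (hs i)
  refine ⟨M * N, ?_, ?_⟩
  · have hCC : (M * N)ᴴ * (M * N) = φ (diagonal fun i => ((s i * (s i)⁻¹ : ℝ) : ℂ)) := by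
      rw [conjTranspose_mul, hNH, ← mul_assoc, mul_assoc N, hNMM, ← map_mul,
        diagonal_mul_diagonal]
      congr 2
      ext i
      push_cast
      rfl
    have hsq : ‖M * N‖ * ‖M * N‖ ≤ 1 := by
      rw [← l2_opNorm_conjTranspose_mul_self, hCC, Unitary.conjStarAlgAut_apply,
        ← Unitary.coe_star, CStarRing.norm_mul_coe_unitary, CStarRing.norm_coe_unitary_mul,
        l2_opNorm_diagonal]
      refine (pi_norm_le_iff_of_nonneg zero_le_one).2 fun i => ?_
      simp only [Complex.norm_real, Real.norm_eq_abs]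
      rw [abs_of_nonneg (by positivity)]
      exact mul_inv_le_one
    nlinarith [norm_nonneg (M * N)]
  · rw [conjTranspose_mul, hNH, mul_assoc, hNMM, trace_conjStarAlgAut,
      traceNorm_eq_sum_sqrt_eigenvalues, trace_diagonal, Complex.re_sum]
    simp [s]

lemma traceNorm_nonneg (M : Matrix n n ℂ) : 0 ≤ traceNorm M := by
  rw [traceNorm_eq_sum_sqrt_eigenvalues]
  positivity

lemma traceNorm_add_le (M N : Matrix n n ℂ) : traceNorm (M + N) ≤ traceNorm M + traceNorm N := by
  obtain ⟨C, hC, hCe⟩ := exists_re_trace_conjTranspose_mul_eq_traceNorm (M + N)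
  rw [← hCe, mul_add, trace_add, Complex.add_re]
  exact add_le_add (re_trace_conjTranspose_mul_le_traceNorm hC M)
    (re_trace_conjTranspose_mul_le_traceNorm hC N)

lemma traceNorm_neg (M : Matrix n n ℂ) : traceNorm (-M) = traceNorm M := by
  rw [traceNorm, traceNorm, conjTranspose_neg, neg_mul_neg]

lemma traceNorm_sub_le (M N : Matrix n n ℂ) : traceNorm (M - N) ≤ traceNorm M + traceNorm N := by
  simpa only [sub_eq_add_neg, traceNorm_neg] using traceNorm_add_le M (-N)

lemma traceNorm_sum_mul_mul_conjTranspose_le {ι : Type*} [Fintype ι] (K : ι → Matrix m n ℂ)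
    (hK : ∑ r, (K r)ᴴ * K r = 1) (X : Matrix n n ℂ) :
    traceNorm (∑ r, K r * X * (K r)ᴴ) ≤ traceNorm X := by
  obtain ⟨C, hC, hCe⟩ := exists_re_trace_conjTranspose_mul_eq_traceNorm (∑ r, K r * X * (K r)ᴴ)
  have htr : (Cᴴ * ∑ r, K r * X * (K r)ᴴ).trace = ((∑ r, (K r)ᴴ * C * K r)ᴴ * X).trace := by
    simp only [Finset.mul_sum, Finset.sum_mul, trace_sum, conjTranspose_sum, conjTranspose_mul,
      conjTranspose_conjTranspose]
    refine Finset.sum_congr rfl fun r _ => ?_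
    simp only [← Matrix.mul_assoc]
    exact (trace_mul_comm _ _).trans (by simp only [Matrix.mul_assoc])
  rw [← hCe, htr]
  exact re_trace_conjTranspose_mul_le_traceNorm (norm_sum_conjTranspose_mul_mul_le_one K hK hC) X

open scoped MatrixOrder in
lemma msqrt_eq_cfcSqrt {M : Matrix n n ℂ} (hM : M.PosSemidef) : msqrt M = CFC.sqrt M := by
  rw [msqrt, dif_pos hM, CFC.sqrt_eq_cfc, cfc_nnreal_eq_real _ M, hM.1.cfc_eq]
  simp only [IsHermitian.cfc, Unitary.conjStarAlgAut_apply]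
  congr 3
  funext i
  simp [max_eq_left (hM.eigenvalues_nonneg i)]

open scoped MatrixOrder in
lemma traceNorm_submatrix (e : m ≃ n) (M : Matrix n n ℂ) :
    traceNorm (M.submatrix e e) = traceNorm M := by
  have hP := posSemidef_conjTranspose_mul_self M
  have hsqrt : CFC.sqrt ((Mᴴ * M).submatrix e e) = (CFC.sqrt (Mᴴ * M)).submatrix e e :=
    CFC.sqrt_unique (by rw [submatrix_mul_equiv, CFC.sqrt_mul_sqrt_self _ hP.nonneg])
      ((CFC.sqrt_nonneg _).posSemidef.submatrix e).nonneg
  rw [traceNorm, traceNorm, conjTranspose_submatrix, submatrix_mul_equiv,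
    msqrt_eq_cfcSqrt (hP.submatrix e), msqrt_eq_cfcSqrt hP, hsqrt]
  simp only [trace, diag, submatrix_apply]
  rw [e.sum_comp (fun i => CFC.sqrt (Mᴴ * M) i i)]

end TraceNorm

theorem choiAction_choi {A O : Type*} [Fintype A] [DecidableEq A]
    (Φ : Matrix A A ℂ →ₗ[ℂ] Matrix O O ℂ) : choiAction (choi Φ) = Φ := by
  ext X o o'
  conv_rhs => rw [matrix_eq_sum_single X]
  simp only [choiAction, choi, LinearMap.coe_mk, AddHom.coe_mk, of_apply, map_sum,
    Matrix.sum_apply]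
  refine Finset.sum_congr rfl fun i _ => Finset.sum_congr rfl fun j _ => ?_
  rw [show single i j (X i j) = X i j • single i j (1 : ℂ) by simp, LinearMap.map_smul,
    Matrix.smul_apply, smul_eq_mul]

theorem IsCPTP.posSemidef_choi {A A' : Type*} [Fintype A] [DecidableEq A] [Fintype A']
    {Φ : Matrix A A ℂ →ₗ[ℂ] Matrix A' A' ℂ} (h : IsCPTP Φ) : (choi Φ).PosSemidef := by
  set e := Fintype.equivFin A
  -- `vecMulVec v (star v)` is the unnormalised maximally entangled state on `A × Fin |A|`.
  set v : A × Fin (Fintype.card A) → ℂ := fun p => if e p.1 = p.2 then 1 else 0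
  have hΩ := h.1 _ _ (posSemidef_vecMulVec_self_star v)
  convert hΩ.submatrix (fun p : A × A' => (p.2, e p.1)) using 1
  ext p q
  simp only [choi, lext, LinearMap.coe_mk, AddHom.coe_mk, submatrix_apply, of_apply]
  refine congrArg (fun Y => Φ Y p.2 q.2) ?_
  ext i j
  simp [v, vecMulVec_apply, single_apply, e.apply_eq_iff_eq, eq_comm]
  split_ifs <;> simp_all

open scoped MatrixOrder in
theorem IsCPTP.exists_kraus {A A' : Type*} [Fintype A] [DecidableEq A] [Fintype A']
    [DecidableEq A'] {Φ : Matrix A A ℂ →ₗ[ℂ] Matrix A' A' ℂ} (h : IsCPTP Φ) :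
    ∃ K : A × A' → Matrix A' A ℂ,
      (∀ X, Φ X = ∑ r, K r * X * (K r)ᴴ) ∧ ∑ r, (K r)ᴴ * K r = 1 := by
  obtain ⟨S, hS⟩ := CStarAlgebra.nonneg_iff_eq_star_mul_self.mp h.posSemidef_choi.nonneg
  refine ⟨fun r => of fun o i => star (S r (i, o)), fun X => ?_, ?_⟩
  · conv_lhs => rw [← choiAction_choi Φ, hS]
    ext o o'
    simp only [choiAction, LinearMap.coe_mk, AddHom.coe_mk, of_apply, mul_apply, Matrix.sum_apply,
      conjTranspose_apply, star_apply, star_star, Finset.mul_sum, Finset.sum_mul]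
    rw [Finset.sum_comm]
    conv_rhs => rw [Finset.sum_comm]
    refine Finset.sum_congr rfl fun j _ => ?_
    conv_rhs => rw [Finset.sum_comm]
    exact Finset.sum_congr rfl fun i _ => Finset.sum_congr rfl fun r _ => by ring
  · ext i j
    have htr : ∑ o, choi Φ (j, o) (i, o) = (single j i (1 : ℂ)).trace := h.2 (single j i 1)
    have hone : (single j i (1 : ℂ)).trace = (1 : Matrix A A ℂ) i j := by
      by_cases hij : i = j
      · rw [hij, trace_single_eq_same, one_apply_eq]
      · rw [trace_single_eq_of_ne _ _ _ (Ne.symm hij), one_apply_ne hij]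
    rw [← hone, ← htr, hS]
    simp only [Matrix.sum_apply, mul_apply, conjTranspose_apply, of_apply, star_star, star_apply]
    rw [Finset.sum_comm]
    exact Finset.sum_congr rfl fun o _ => Finset.sum_congr rfl fun r _ => mul_comm _ _

lemma lext_eq_sum_kronecker_one {A A' B ι : Type*} [Fintype A] [Fintype A'] [Fintype B]
    [DecidableEq B] [Fintype ι] {Φ : Matrix A A ℂ →ₗ[ℂ] Matrix A' A' ℂ} {K : ι → Matrix A' A ℂ}
    (hK : ∀ X, Φ X = ∑ r, K r * X * (K r)ᴴ) (M : Matrix (A × B) (A × B) ℂ) :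
    lext Φ M = ∑ r, (K r ⊗ₖ (1 : Matrix B B ℂ)) * M * (K r ⊗ₖ (1 : Matrix B B ℂ))ᴴ := by
  ext ⟨a, b⟩ ⟨a', b'⟩
  simp [lext, hK, Matrix.sum_apply, mul_apply, kroneckerMap_apply, one_apply,
    Fintype.sum_prod_type, Finset.sum_mul, apply_ite (starRingEnd ℂ), mul_ite]

lemma sum_conjTranspose_mul_kronecker_one_eq_one {A A' B ι : Type*} [Fintype A] [DecidableEq A]
    [Fintype A'] [Fintype B] [DecidableEq B] [Fintype ι] {K : ι → Matrix A' A ℂ}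
    (hK : ∑ r, (K r)ᴴ * K r = 1) :
    ∑ r, (K r ⊗ₖ (1 : Matrix B B ℂ))ᴴ * (K r ⊗ₖ (1 : Matrix B B ℂ)) = 1 := by
  simp only [conjTranspose_kronecker, conjTranspose_one, ← mul_kronecker_mul, one_mul]
  rw [← one_kronecker_one, ← hK]
  ext p q
  simp [Matrix.sum_apply, kroneckerMap_apply, Finset.sum_mul]

theorem IsCPTP.traceNorm_lext_le {A A' C : Type*} [Fintype A] [DecidableEq A] [Fintype A']
    [DecidableEq A'] [Fintype C] [DecidableEq C] {Φ : Matrix A A ℂ →ₗ[ℂ] Matrix A' A' ℂ}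
    (h : IsCPTP Φ) (M : Matrix (A × C) (A × C) ℂ) :
    traceNorm (lext Φ M) ≤ traceNorm M := by
  obtain ⟨K, hΦ, hK⟩ := h.exists_kraus
  rw [lext_eq_sum_kronecker_one hΦ]
  exact traceNorm_sum_mul_mul_conjTranspose_le _ (sum_conjTranspose_mul_kronecker_one_eq_one hK) M

lemma rext_comp_lext {A A' B B' : Type*} [Fintype A] [DecidableEq A] [Fintype A'] [Fintype B]
    [DecidableEq B] [Fintype B'] (Φ : Matrix A A ℂ →ₗ[ℂ] Matrix A' A' ℂ)
    (Ψ : Matrix B B ℂ →ₗ[ℂ] Matrix B' B' ℂ) :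
    rext Ψ ∘ₗ lext Φ = lext Φ ∘ₗ rext Ψ := by
  ext M ⟨a, b⟩ ⟨a', b'⟩
  simp only [LinearMap.comp_apply, lext, rext, LinearMap.coe_mk, AddHom.coe_mk, of_apply]
  rw [← choiAction_choi Φ, ← choiAction_choi Ψ]
  simp only [choiAction, LinearMap.coe_mk, AddHom.coe_mk, of_apply, Finset.sum_mul]
  conv_lhs => enter [2, k]; rw [Finset.sum_comm]
  conv_lhs => enter [2, k, 2, i]; rw [Finset.sum_comm]
  rw [Finset.sum_comm]
  refine Finset.sum_congr rfl fun i _ => ?_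
  rw [Finset.sum_comm]
  exact Finset.sum_congr rfl fun j _ => Finset.sum_congr rfl fun k _ =>
    Finset.sum_congr rfl fun l _ => by ring

lemma tensorMap_sub_tensorMap {A A' B B' : Type*} [Fintype A] [DecidableEq A] [Fintype A']
    [Fintype B] [DecidableEq B] [Fintype B']
    (E E' : Matrix A A ℂ →ₗ[ℂ] Matrix A' A' ℂ) (F F' : Matrix B B ℂ →ₗ[ℂ] Matrix B' B' ℂ) :
    tensorMap E F - tensorMap E' F' = rext F ∘ₗ lext (E - E') + lext E' ∘ₗ rext (F - F') := by
  rw [← rext_comp_lext]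
  ext M : 1
  simp only [tensorMap, LinearMap.sub_apply, LinearMap.add_apply, LinearMap.comp_apply]
  rw [show lext (B := B) (E - E') M = lext E M - lext E' M from rfl,
    show rext (A := A') (F - F') (lext E' M) = rext F (lext E' M) - rext F' (lext E' M) from rfl,
    map_sub]
  abel

lemma traceNorm_lext_lext {X X' D C : Type*} [Fintype X] [Fintype X'] [DecidableEq X']
    [Fintype D] [DecidableEq D] [Fintype C] [DecidableEq C]
    (G : Matrix X X ℂ →ₗ[ℂ] Matrix X' X' ℂ) (M : Matrix ((X × D) × C) ((X × D) × C) ℂ) :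
    traceNorm (lext (B := C) (lext (B := D) G) M) =
      traceNorm (lext G
        (M.submatrix (Equiv.prodAssoc X D C).symm (Equiv.prodAssoc X D C).symm)) := by
  rw [← traceNorm_submatrix (Equiv.prodAssoc X' D C).symm]
  rfl

lemma traceNorm_lext_rext {X Y Y' C : Type*} [Fintype X] [DecidableEq X] [Fintype Y]
    [Fintype Y'] [DecidableEq Y'] [Fintype C] [DecidableEq C]
    (G : Matrix Y Y ℂ →ₗ[ℂ] Matrix Y' Y' ℂ) (M : Matrix ((X × Y) × C) ((X × Y) × C) ℂ) :
    traceNorm (lext (B := C) (rext (A := X) G) M) = traceNorm (lext G (M.submatrix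
      ((Equiv.prodAssoc Y X C).symm.trans ((Equiv.prodComm Y X).prodCongr (Equiv.refl C)))
      ((Equiv.prodAssoc Y X C).symm.trans ((Equiv.prodComm Y X).prodCongr (Equiv.refl C))))) := by
  rw [← traceNorm_submatrix ((Equiv.prodAssoc Y' X C).symm.trans
    ((Equiv.prodComm Y' X).prodCongr (Equiv.refl C)))]
  rfl

lemma diamondNorm_nonneg {A A' : Type*} [Fintype A] [DecidableEq A] [Fintype A'] [DecidableEq A']
    (Φ : Matrix A A ℂ →ₗ[ℂ] Matrix A' A' ℂ) : 0 ≤ diamondNorm Φ :=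
  Real.sSup_nonneg fun _ ⟨_, _, _, hr⟩ => hr ▸ traceNorm_nonneg _

theorem traceNorm_lext_sub_le_diamondNorm {A A' C : Type*} [Fintype A] [DecidableEq A]
    [Fintype A'] [DecidableEq A'] [Fintype C] [DecidableEq C]
    {E E' : Matrix A A ℂ →ₗ[ℂ] Matrix A' A' ℂ} (hE : IsCPTP E) (hE' : IsCPTP E')
    {M : Matrix (A × C) (A × C) ℂ} (hM : traceNorm M = 1) :
    traceNorm (lext (E - E') M) ≤ diamondNorm (E - E') := by
  have hbdd : BddAbove {r | ∃ (k : ℕ) (X : Matrix (A × Fin k) (A × Fin k) ℂ),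
      traceNorm X = 1 ∧ r = traceNorm (lext (B := Fin k) (E - E') X)} := by
    refine ⟨1 + 1, ?_⟩
    rintro _ ⟨k, X, hX, rfl⟩
    rw [← hX]
    exact (traceNorm_sub_le (lext E X) (lext E' X)).trans
      (add_le_add (hE.traceNorm_lext_le X) (hE'.traceNorm_lext_le X))
  set e := Fintype.equivFin C
  calc traceNorm (lext (E - E') M)
      = traceNorm ((lext (E - E') M).submatrix (Prod.map id e.symm) (Prod.map id e.symm)) :=
        (traceNorm_submatrix ((Equiv.refl A').prodCongr e.symm) _).symm
    _ = traceNorm (lext (E - E') (M.submatrix (Prod.map id e.symm) (Prod.map id e.symm))) := rfl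
    _ ≤ diamondNorm (E - E') := le_csSup hbdd
        ⟨_, _, (traceNorm_submatrix ((Equiv.refl A).prodCongr e.symm) M).trans hM, rfl⟩

section Regroup

variable {X X' D C : Type*} [Fintype X] [DecidableEq X] [Fintype X'] [DecidableEq X']
  [Fintype D] [DecidableEq D] [Fintype C] [DecidableEq C]

theorem IsCPTP.traceNorm_lext_lext_le {Φ : Matrix X X ℂ →ₗ[ℂ] Matrix X' X' ℂ} (h : IsCPTP Φ)
    (M : Matrix ((X × D) × C) ((X × D) × C) ℂ) :
    traceNorm (lext (B := C) (lext (B := D) Φ) M) ≤ traceNorm M := by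
  rw [traceNorm_lext_lext, ← traceNorm_submatrix (Equiv.prodAssoc X D C).symm M]
  exact h.traceNorm_lext_le _

theorem IsCPTP.traceNorm_lext_rext_le {Φ : Matrix X X ℂ →ₗ[ℂ] Matrix X' X' ℂ} (h : IsCPTP Φ)
    (M : Matrix ((D × X) × C) ((D × X) × C) ℂ) :
    traceNorm (lext (B := C) (rext (A := D) Φ) M) ≤ traceNorm M := by
  rw [traceNorm_lext_rext, ← traceNorm_submatrix ((Equiv.prodAssoc X D C).symm.trans
    ((Equiv.prodComm X D).prodCongr (Equiv.refl C))) M]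
  exact h.traceNorm_lext_le _

theorem traceNorm_lext_lext_sub_le_diamondNorm {E E' : Matrix X X ℂ →ₗ[ℂ] Matrix X' X' ℂ}
    (hE : IsCPTP E) (hE' : IsCPTP E') {M : Matrix ((X × D) × C) ((X × D) × C) ℂ}
    (hM : traceNorm M = 1) :
    traceNorm (lext (B := C) (lext (B := D) (E - E')) M) ≤ diamondNorm (E - E') := by
  rw [traceNorm_lext_lext]
  exact traceNorm_lext_sub_le_diamondNorm hE hE' ((traceNorm_submatrix _ M).trans hM)

theorem traceNorm_lext_rext_sub_le_diamondNorm {F F' : Matrix X X ℂ →ₗ[ℂ] Matrix X' X' ℂ}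
    (hF : IsCPTP F) (hF' : IsCPTP F') {M : Matrix ((D × X) × C) ((D × X) × C) ℂ}
    (hM : traceNorm M = 1) :
    traceNorm (lext (B := C) (rext (A := D) (F - F')) M) ≤ diamondNorm (F - F') := by
  rw [traceNorm_lext_rext]
  exact traceNorm_lext_sub_le_diamondNorm hF hF' ((traceNorm_submatrix _ M).trans hM)

end Regroup

/-- Subadditivity of the diamond norm for differences of tensor products of channels. -/
theorem diamondNorm_tensor_sub_le {A A' B B' : Type*}
    [Fintype A] [DecidableEq A] [Fintype A'] [DecidableEq A']
    [Fintype B] [DecidableEq B] [Fintype B'] [DecidableEq B']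
    (E E' : Matrix A A ℂ →ₗ[ℂ] Matrix A' A' ℂ)
    (F F' : Matrix B B ℂ →ₗ[ℂ] Matrix B' B' ℂ)
    (hE : IsCPTP E) (hE' : IsCPTP E') (hF : IsCPTP F) (hF' : IsCPTP F') :
    diamondNorm (tensorMap E F - tensorMap E' F') ≤
      diamondNorm (E - E') + diamondNorm (F - F') := by
  refine Real.sSup_le ?_ (add_nonneg (diamondNorm_nonneg _) (diamondNorm_nonneg _))
  rintro _ ⟨k, X, hX, rfl⟩
  rw [tensorMap_sub_tensorMap]
  calc traceNorm (lext (rext F ∘ₗ lext (E - E') + lext E' ∘ₗ rext (F - F')) X)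
      ≤ traceNorm (lext (rext F) (lext (lext (E - E')) X))
        + traceNorm (lext (lext E') (lext (rext (F - F')) X)) := traceNorm_add_le _ _
    _ ≤ traceNorm (lext (lext (E - E')) X) + traceNorm (lext (rext (F - F')) X) :=
        add_le_add (hF.traceNorm_lext_rext_le _) (hE'.traceNorm_lext_lext_le _)
    _ ≤ diamondNorm (E - E') + diamondNorm (F - F') :=
        add_le_add (traceNorm_lext_lext_sub_le_diamondNorm hE hE' hX)
          (traceNorm_lext_rext_sub_le_diamondNorm hF hF' hX)

end QIT

end
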